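/- Let a : ℝ³ → ℝ be continuous and uniformly positive (a ≥ a₀ > 0), f : ℝ³ → ℝ continuous, and L : ℝ³ → ℝ C² satisfying L_u − L_{xp} − p·L_{up} + (f(x,u,p)/a(x,u,p))·L_{pp} = 0 for all (x,u,p). If u : ℝ × [0,1] → ℝ is a C² solution of the quasilinear equation u_t = a(x,u,u_x)·u_xx + f(x,u,u_x) with u(t,0) = u(t,1) = 0 for all t, then V(t) = ∫₀¹ L(x,u,u_x) dx satisfies V'(t) = −∫₀¹ a(x,u,u_x)⁻¹·L_{pp}(x,u,u_x)·(u_t)² dx. -/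

import Mathlib

/-!
Differentiating under the integral sign, `V'(t) = ∫₀¹ (u_t L_u + u_{xt} L_p) dx`. Since `u_t`
vanishes at `x = 0, 1`, integrating `u_{tx} L_p` by parts turns this into
`∫₀¹ u_t · E dx`, where `E = L_u - L_{xp} - u_x L_{up} - u_{xx} L_{pp}` is the Euler–Lagrange
expression of `L` along `u`. The identity imposed on `L` gives `E = -(f/a + u_xx) L_pp`, and the
equation for `u` gives `f/a + u_xx = u_t / a`.
-/

open Function Set MeasureTheory intervalIntegral

section Slices

variable {E : Type*} [NormedAddCommGroup E] [NormedSpace ℝ E] {G : ℝ × ℝ → E} {s x : ℝ}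

theorem DifferentiableAt.hasDerivAt_comp_prodMk_left (h : DifferentiableAt ℝ G (s, x)) :
    HasDerivAt (fun s' => G (s', x)) (fderiv ℝ G (s, x) (1, 0)) s :=
  h.hasFDerivAt.comp_hasDerivAt s ((hasDerivAt_id s).prodMk (hasDerivAt_const s x))

theorem DifferentiableAt.hasDerivAt_comp_prodMk_right (h : DifferentiableAt ℝ G (s, x)) :
    HasDerivAt (fun x' => G (s, x')) (fderiv ℝ G (s, x) (0, 1)) x :=
  h.hasFDerivAt.comp_hasDerivAt x ((hasDerivAt_const x s).prodMk (hasDerivAt_id x))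

end Slices

section TwoVariables

variable {F : ℝ → ℝ → ℝ} {m n : WithTop ℕ∞}

theorem contDiff_uncurry_deriv_fst (hF : ContDiff ℝ n (uncurry F)) (hmn : m + 1 ≤ n) :
    ContDiff ℝ m (uncurry fun s x => deriv (fun s' => F s' x) s) := by
  have hd := (hF.of_le hmn).differentiable (by simp)
  have h : (uncurry fun s x => deriv (fun s' => F s' x) s) =
      fun q => fderiv ℝ (uncurry F) q (1, 0) :=
    funext fun q => (hd q).hasDerivAt_comp_prodMk_left.deriv
  rw [h]
  exact (hF.fderiv_right hmn).clm_apply contDiff_const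

theorem contDiff_uncurry_deriv_snd (hF : ContDiff ℝ n (uncurry F)) (hmn : m + 1 ≤ n) :
    ContDiff ℝ m (uncurry fun s x => deriv (F s) x) := by
  have hd := (hF.of_le hmn).differentiable (by simp)
  have h : (uncurry fun s x => deriv (F s) x) = fun q => fderiv ℝ (uncurry F) q (0, 1) :=
    funext fun q => (hd q).hasDerivAt_comp_prodMk_right.deriv
  rw [h]
  exact (hF.fderiv_right hmn).clm_apply contDiff_const

theorem deriv_deriv_comm (hF : ContDiff ℝ 2 (uncurry F)) (s x : ℝ) :
    deriv (fun x' => deriv (fun s' => F s' x') s) x = deriv (fun s' => deriv (F s') x) s := by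
  have hd : Differentiable ℝ (uncurry F) := hF.differentiable two_ne_zero
  have hdd : Differentiable ℝ (fderiv ℝ (uncurry F)) :=
    (hF.fderiv_right (m := 1) (by norm_num)).differentiable one_ne_zero
  have h₁ : (fun x' => deriv (fun s' => F s' x') s) =
      fun x' => fderiv ℝ (uncurry F) (s, x') (1, 0) :=
    funext fun x' => (hd _).hasDerivAt_comp_prodMk_left.deriv
  have h₂ : (fun s' => deriv (F s') x) = fun s' => fderiv ℝ (uncurry F) (s', x) (0, 1) :=
    funext fun s' => (hd _).hasDerivAt_comp_prodMk_right.deriv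
  rw [h₁, h₂, ((hdd _).hasDerivAt_comp_prodMk_right.clm_apply (hasDerivAt_const _ _)).deriv,
    ((hdd _).hasDerivAt_comp_prodMk_left.clm_apply (hasDerivAt_const _ _)).deriv]
  simpa using hF.contDiffAt.isSymmSndFDerivAt (by simp) (0, 1) (1, 0)

end TwoVariables

def uncurry₃ {α β γ δ : Type*} (F : α → β → γ → δ) : α × β × γ → δ := fun v => F v.1 v.2.1 v.2.2

section ThreeVariables

variable (F : ℝ → ℝ → ℝ → ℝ)

noncomputable def pderiv₁ (x y p : ℝ) : ℝ := deriv (fun z => F z y p) x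

noncomputable def pderiv₂ (x y p : ℝ) : ℝ := deriv (fun w => F x w p) y

noncomputable def pderiv₃ (x y p : ℝ) : ℝ := deriv (F x y) p

variable {F} {m n : WithTop ℕ∞} {γ₁ γ₂ γ₃ : ℝ → ℝ}

theorem Continuous.uncurry₃_comp {X : Type*} [TopologicalSpace X] {γ₁ γ₂ γ₃ : X → ℝ}
    (hF : Continuous (uncurry₃ F)) (h₁ : Continuous γ₁) (h₂ : Continuous γ₂)
    (h₃ : Continuous γ₃) : Continuous fun s => F (γ₁ s) (γ₂ s) (γ₃ s) :=
  hF.comp (h₁.prodMk (h₂.prodMk h₃))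

theorem DifferentiableAt.hasDerivAt_uncurry₃_comp_fderiv {d₁ d₂ d₃ t : ℝ}
    (hF : DifferentiableAt ℝ (uncurry₃ F) (γ₁ t, γ₂ t, γ₃ t))
    (h₁ : HasDerivAt γ₁ d₁ t) (h₂ : HasDerivAt γ₂ d₂ t) (h₃ : HasDerivAt γ₃ d₃ t) :
    HasDerivAt (fun s => F (γ₁ s) (γ₂ s) (γ₃ s))
      (fderiv ℝ (uncurry₃ F) (γ₁ t, γ₂ t, γ₃ t) (d₁, d₂, d₃)) t :=
  HasFDerivAt.comp_hasDerivAt (l := uncurry₃ F) t hF.hasFDerivAt (h₁.prodMk (h₂.prodMk h₃))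

theorem DifferentiableAt.pderiv₁_eq_fderiv {x y p : ℝ}
    (hF : DifferentiableAt ℝ (uncurry₃ F) (x, y, p)) :
    pderiv₁ F x y p = fderiv ℝ (uncurry₃ F) (x, y, p) (1, 0, 0) :=
  (hF.hasDerivAt_uncurry₃_comp_fderiv (hasDerivAt_id x) (hasDerivAt_const x y)
    (hasDerivAt_const x p)).deriv

theorem DifferentiableAt.pderiv₂_eq_fderiv {x y p : ℝ}
    (hF : DifferentiableAt ℝ (uncurry₃ F) (x, y, p)) :
    pderiv₂ F x y p = fderiv ℝ (uncurry₃ F) (x, y, p) (0, 1, 0) :=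
  (hF.hasDerivAt_uncurry₃_comp_fderiv (hasDerivAt_const y x) (hasDerivAt_id y)
    (hasDerivAt_const y p)).deriv

theorem DifferentiableAt.pderiv₃_eq_fderiv {x y p : ℝ}
    (hF : DifferentiableAt ℝ (uncurry₃ F) (x, y, p)) :
    pderiv₃ F x y p = fderiv ℝ (uncurry₃ F) (x, y, p) (0, 0, 1) :=
  (hF.hasDerivAt_uncurry₃_comp_fderiv (hasDerivAt_const p x) (hasDerivAt_const p y)
    (hasDerivAt_id p)).deriv

theorem DifferentiableAt.hasDerivAt_uncurry₃_comp {d₁ d₂ d₃ t : ℝ}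
    (hF : DifferentiableAt ℝ (uncurry₃ F) (γ₁ t, γ₂ t, γ₃ t))
    (h₁ : HasDerivAt γ₁ d₁ t) (h₂ : HasDerivAt γ₂ d₂ t) (h₃ : HasDerivAt γ₃ d₃ t) :
    HasDerivAt (fun s => F (γ₁ s) (γ₂ s) (γ₃ s))
      (d₁ * pderiv₁ F (γ₁ t) (γ₂ t) (γ₃ t) + d₂ * pderiv₂ F (γ₁ t) (γ₂ t) (γ₃ t)
        + d₃ * pderiv₃ F (γ₁ t) (γ₂ t) (γ₃ t)) t := by
  have hd : ((d₁, d₂, d₃) : ℝ × ℝ × ℝ) = d₁ • (1, 0, 0) + d₂ • (0, 1, 0) + d₃ • (0, 0, 1) := by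
    simp
  convert hF.hasDerivAt_uncurry₃_comp_fderiv h₁ h₂ h₃ using 1
  rw [hd, map_add, map_add, map_smul, map_smul, map_smul, hF.pderiv₁_eq_fderiv,
    hF.pderiv₂_eq_fderiv, hF.pderiv₃_eq_fderiv, smul_eq_mul, smul_eq_mul, smul_eq_mul]

theorem ContDiff.uncurry₃_pderiv₁ (hF : ContDiff ℝ n (uncurry₃ F)) (hmn : m + 1 ≤ n) :
    ContDiff ℝ m (uncurry₃ (pderiv₁ F)) := by
  have hd := (hF.of_le hmn).differentiable (by simp)
  have h : uncurry₃ (pderiv₁ F) = fun v => fderiv ℝ (uncurry₃ F) v (1, 0, 0) :=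
    funext fun v => (hd v).pderiv₁_eq_fderiv
  rw [h]
  exact (hF.fderiv_right hmn).clm_apply contDiff_const

theorem ContDiff.uncurry₃_pderiv₂ (hF : ContDiff ℝ n (uncurry₃ F)) (hmn : m + 1 ≤ n) :
    ContDiff ℝ m (uncurry₃ (pderiv₂ F)) := by
  have hd := (hF.of_le hmn).differentiable (by simp)
  have h : uncurry₃ (pderiv₂ F) = fun v => fderiv ℝ (uncurry₃ F) v (0, 1, 0) :=
    funext fun v => (hd v).pderiv₂_eq_fderiv
  rw [h]
  exact (hF.fderiv_right hmn).clm_apply contDiff_const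

theorem ContDiff.uncurry₃_pderiv₃ (hF : ContDiff ℝ n (uncurry₃ F)) (hmn : m + 1 ≤ n) :
    ContDiff ℝ m (uncurry₃ (pderiv₃ F)) := by
  have hd := (hF.of_le hmn).differentiable (by simp)
  have h : uncurry₃ (pderiv₃ F) = fun v => fderiv ℝ (uncurry₃ F) v (0, 0, 1) :=
    funext fun v => (hd v).pderiv₃_eq_fderiv
  rw [h]
  exact (hF.fderiv_right hmn).clm_apply contDiff_const

end ThreeVariables

theorem hasDerivAt_intervalIntegral_of_continuous {E : Type*} [NormedAddCommGroup E]
    [NormedSpace ℝ E] {F F' : ℝ → ℝ → E} {a b : ℝ} (hF : ∀ s, Continuous (F s))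
    (hF' : Continuous (uncurry F')) (hderiv : ∀ s x, HasDerivAt (fun s => F s x) (F' s x) s)
    (t : ℝ) : HasDerivAt (fun s => ∫ x in a..b, F s x) (∫ x in a..b, F' t x) t := by
  obtain ⟨M, hM⟩ := ((isCompact_closedBall t 1).prod isCompact_uIcc).exists_bound_of_continuousOn
    hF'.continuousOn
  exact (hasDerivAt_integral_of_dominated_loc_of_deriv_le (bound := fun _ => M)
    (Metric.ball_mem_nhds t one_pos) (.of_forall fun s => (hF s).aestronglyMeasurable)
    ((hF t).intervalIntegrable a b) (hF'.comp (Continuous.prodMk_right t)).aestronglyMeasurable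
    (ae_of_all _ fun x hx s hs =>
      hM (s, x) ⟨Metric.ball_subset_closedBall hs, uIoc_subset_uIcc hx⟩)
    intervalIntegrable_const (ae_of_all _ fun x _ s _ => hderiv s x)).2

theorem hasDerivAt_integral_lagrangian {L : ℝ → ℝ → ℝ → ℝ} (hL : ContDiff ℝ 1 (uncurry₃ L))
    {u : ℝ → ℝ → ℝ} (hu : ContDiff ℝ 2 (uncurry u)) (a b t : ℝ) :
    HasDerivAt (fun s => ∫ x in a..b, L x (u s x) (deriv (u s) x))
      (∫ x in a..b, (deriv (fun s => u s x) t * pderiv₂ L x (u t x) (deriv (u t) x)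
        + deriv (fun z => deriv (fun s => u s z) t) x * pderiv₃ L x (u t x) (deriv (u t) x)))
      t := by
  have hux : ContDiff ℝ 1 (uncurry fun s x => deriv (u s) x) :=
    contDiff_uncurry_deriv_snd hu (by norm_num)
  have hut : ContDiff ℝ 1 (uncurry fun s x => deriv (fun s' => u s' x) s) :=
    contDiff_uncurry_deriv_fst hu (by norm_num)
  have hutx : Continuous (uncurry fun s x => deriv (fun z => deriv (fun s' => u s' z) s) x) :=
    (contDiff_uncurry_deriv_snd hut (m := 0) (by simp)).continuous
  have hLu : Continuous (uncurry₃ (pderiv₂ L)) :=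
    (hL.uncurry₃_pderiv₂ (m := 0) (by simp)).continuous
  have hLp : Continuous (uncurry₃ (pderiv₃ L)) :=
    (hL.uncurry₃_pderiv₃ (m := 0) (by simp)).continuous
  refine hasDerivAt_intervalIntegral_of_continuous (F := fun s x => L x (u s x) (deriv (u s) x))
    (F' := fun s x => deriv (fun s' => u s' x) s * pderiv₂ L x (u s x) (deriv (u s) x)
      + deriv (fun z => deriv (fun s' => u s' z) s) x * pderiv₃ L x (u s x) (deriv (u s) x))
    (fun s => ?_) ?_ (fun s x => ?_) t
  · exact hL.continuous.uncurry₃_comp continuous_id (hu.continuous.comp (.prodMk_right s))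
      (hux.continuous.comp (.prodMk_right s))
  · exact (hut.continuous.mul (hLu.uncurry₃_comp continuous_snd hu.continuous hux.continuous)).add
      (hutx.mul (hLp.uncurry₃_comp continuous_snd hu.continuous hux.continuous))
  · have hu_t : HasDerivAt (fun s' => u s' x) (deriv (fun s' => u s' x) s) s :=
      ((hu.differentiable two_ne_zero) (s, x)).hasDerivAt_comp_prodMk_left.differentiableAt
        |>.hasDerivAt
    have hux_t : HasDerivAt (fun s' => deriv (u s') x)
        (deriv (fun z => deriv (fun s' => u s' z) s) x) s := by
      rw [deriv_deriv_comm hu]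
      exact ((hux.differentiable one_ne_zero) (s, x)).hasDerivAt_comp_prodMk_left.differentiableAt
        |>.hasDerivAt
    simpa using ((hL.differentiable one_ne_zero) _).hasDerivAt_uncurry₃_comp
      (hasDerivAt_const s x) hu_t hux_t

theorem integral_firstVariation_eq {L : ℝ → ℝ → ℝ → ℝ} (hL : ContDiff ℝ 2 (uncurry₃ L))
    {w v : ℝ → ℝ} {a b : ℝ} (hw : ContDiff ℝ 2 w) (hv : ContDiff ℝ 1 v) (hva : v a = 0)
    (hvb : v b = 0) :
    ∫ x in a..b, (v x * pderiv₂ L x (w x) (deriv w x) + deriv v x * pderiv₃ L x (w x) (deriv w x))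
      = ∫ x in a..b, v x * (pderiv₂ L x (w x) (deriv w x)
          - pderiv₁ (pderiv₃ L) x (w x) (deriv w x)
          - deriv w x * pderiv₂ (pderiv₃ L) x (w x) (deriv w x)
          - deriv (deriv w) x * pderiv₃ (pderiv₃ L) x (w x) (deriv w x)) := by
  have hLp : ContDiff ℝ 1 (uncurry₃ (pderiv₃ L)) := hL.uncurry₃_pderiv₃ (by norm_num)
  have hw' : Continuous (deriv w) := hw.continuous_deriv one_le_two
  have hdw : ContDiff ℝ 1 (deriv w) := ContDiff.deriv' (n := 1) hw
  have hLpx : ∀ x, HasDerivAt (fun z => pderiv₃ L z (w z) (deriv w z))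
      (pderiv₁ (pderiv₃ L) x (w x) (deriv w x)
        + deriv w x * pderiv₂ (pderiv₃ L) x (w x) (deriv w x)
        + deriv (deriv w) x * pderiv₃ (pderiv₃ L) x (w x) (deriv w x)) x := by
    intro x
    simpa using ((hLp.differentiable one_ne_zero) _).hasDerivAt_uncurry₃_comp (hasDerivAt_id x)
      ((hw.differentiable two_ne_zero) x).hasDerivAt
      ((hdw.differentiable one_ne_zero) x).hasDerivAt
  have hcomp : ∀ G : ℝ → ℝ → ℝ → ℝ, Continuous (uncurry₃ G) →
      Continuous fun x => G x (w x) (deriv w x) :=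
    fun G hG => hG.uncurry₃_comp continuous_id hw.continuous hw'
  have c₂ := hcomp _ (hL.uncurry₃_pderiv₂ (m := 0) (by norm_num)).continuous
  have c₃ := hcomp _ hLp.continuous
  have c₃₁ := hcomp _ (hLp.uncurry₃_pderiv₁ (m := 0) (by norm_num)).continuous
  have c₃₂ := hcomp _ (hLp.uncurry₃_pderiv₂ (m := 0) (by norm_num)).continuous
  have c₃₃ := hcomp _ (hLp.uncurry₃_pderiv₃ (m := 0) (by norm_num)).continuous
  have hv' := hv.continuous_deriv le_rfl
  have hddw := hdw.continuous_deriv le_rfl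
  have hvLp := fun x => ((hv.differentiable one_ne_zero) x).hasDerivAt.mul (hLpx x)
  have hvc := hv.continuous
  have hint : ∀ {f : ℝ → ℝ}, Continuous f → IntervalIntegrable f volume a b :=
    fun hf => hf.intervalIntegrable a b
  have hboundary := integral_eq_sub_of_hasDerivAt (fun x _ => hvLp x) (hint (by fun_prop))
  simp only [Pi.mul_apply, hva, hvb, zero_mul, sub_self] at hboundary
  rw [← sub_eq_zero, ← intervalIntegral.integral_sub (hint (by fun_prop)) (hint (by fun_prop))]
  exact (integral_congr fun x _ => by ring).trans hboundary

theorem mul_eulerLagrange_eq_neg {A F Lu Lxp Lup Lpp p q v : ℝ} (hA : A ≠ 0)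
    (hEL : Lu - Lxp - p * Lup + F / A * Lpp = 0) (hv : v = A * q + F) :
    v * (Lu - Lxp - p * Lup - q * Lpp) = -(A⁻¹ * Lpp * v ^ 2) := by
  field_simp at hEL ⊢
  linear_combination v * hEL + v * Lpp * hv

theorem stmt15_general
    (a f : ℝ → ℝ → ℝ → ℝ)
    (a₀ : ℝ) (ha₀ : 0 < a₀) (hapos : ∀ x y p, a₀ ≤ a x y p)
    (L : ℝ → ℝ → ℝ → ℝ) (hL : ContDiff ℝ 2 fun v : ℝ × ℝ × ℝ => L v.1 v.2.1 v.2.2)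
    (hpde : ∀ x y p,
      deriv (fun w => L x w p) y
        - deriv (fun z => deriv (fun w => L z y w) p) x
        - p * deriv (fun w => deriv (fun w' => L x w w') p) y
        + (f x y p / a x y p) * deriv (fun w => deriv (fun w' => L x y w') w) p = 0)
    (u : ℝ → ℝ → ℝ) (hu : ContDiff ℝ 2 (Function.uncurry u))
    (upde : ∀ t, ∀ x ∈ Set.Icc (0:ℝ) 1,
      deriv (fun s => u s x) t
        = a x (u t x) (deriv (u t) x) * deriv (deriv (u t)) x
          + f x (u t x) (deriv (u t) x))
    (bc0 : ∀ t, u t 0 = 0) (bc1 : ∀ t, u t 1 = 0) :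
    ∀ t, HasDerivAt
      (fun s => ∫ x in (0:ℝ)..1, L x (u s x) (deriv (u s) x))
      (-∫ x in (0:ℝ)..1,
        (a x (u t x) (deriv (u t) x))⁻¹
          * deriv (fun w => deriv (fun w' => L x (u t x) w') w) (deriv (u t) x)
          * (deriv (fun s => u s x) t)^2) t := by
  intro t
  have hslice : ContDiff ℝ 2 (u t) := hu.comp (contDiff_const.prodMk contDiff_id)
  have hut : ContDiff ℝ 1 fun x => deriv (fun s => u s x) t :=
    (contDiff_uncurry_deriv_fst hu (m := 1) (by norm_num)).comp
      (contDiff_const.prodMk contDiff_id)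
  have hut₀ : deriv (fun s => u s 0) t = 0 := by simp [bc0]
  have hut₁ : deriv (fun s => u s 1) t = 0 := by simp [bc1]
  refine (hasDerivAt_integral_lagrangian (hL.of_le one_le_two) hu 0 1 t).congr_deriv ?_
  rw [integral_firstVariation_eq hL hslice hut hut₀ hut₁, ← intervalIntegral.integral_neg]
  exact integral_congr fun x hx => mul_eulerLagrange_eq_neg (ha₀.trans_le (hapos _ _ _)).ne'
    (hpde _ _ _) (upde t x (by rwa [uIcc_of_le zero_le_one] at hx))

/-- Quasilinear version of Matano's Lyapunov function: if `L` satisfies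
`L_u − L_{xp} − p·L_{up} + (f/a)·L_{pp} = 0`, then along Dirichlet solutions of
`u_t = a(x,u,u_x)·u_xx + f(x,u,u_x)` the functional `V(t) = ∫₀¹ L(x,u,u_x) dx`
satisfies `V'(t) = −∫₀¹ a⁻¹·L_{pp}·u_t² dx`. -/
theorem stmt15
    (a f : ℝ → ℝ → ℝ → ℝ)
    (ha : Continuous fun v : ℝ × ℝ × ℝ => a v.1 v.2.1 v.2.2)
    (a₀ : ℝ) (ha₀ : 0 < a₀) (hapos : ∀ x y p, a₀ ≤ a x y p)
    (hf : Continuous fun v : ℝ × ℝ × ℝ => f v.1 v.2.1 v.2.2)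
    (L : ℝ → ℝ → ℝ → ℝ) (hL : ContDiff ℝ 2 fun v : ℝ × ℝ × ℝ => L v.1 v.2.1 v.2.2)
    (hpde : ∀ x y p,
      deriv (fun w => L x w p) y
        - deriv (fun z => deriv (fun w => L z y w) p) x
        - p * deriv (fun w => deriv (fun w' => L x w w') p) y
        + (f x y p / a x y p) * deriv (fun w => deriv (fun w' => L x y w') w) p = 0)
    (u : ℝ → ℝ → ℝ) (hu : ContDiff ℝ 2 (Function.uncurry u))
    (upde : ∀ t, ∀ x ∈ Set.Icc (0:ℝ) 1,
      deriv (fun s => u s x) t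
        = a x (u t x) (deriv (u t) x) * deriv (deriv (u t)) x
          + f x (u t x) (deriv (u t) x))
    (bc0 : ∀ t, u t 0 = 0) (bc1 : ∀ t, u t 1 = 0) :
    ∀ t, HasDerivAt
      (fun s => ∫ x in (0:ℝ)..1, L x (u s x) (deriv (u s) x))
      (-∫ x in (0:ℝ)..1,
        (a x (u t x) (deriv (u t) x))⁻¹
          * deriv (fun w => deriv (fun w' => L x (u t x) w') w) (deriv (u t) x)
          * (deriv (fun s => u s x) t)^2) t :=
  stmt15_general a f a₀ ha₀ hapos L hL hpde u hu upde bc0 bc1
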